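/- arXiv:1011.0902 — 12 statements merged into one kernel-verified Lean document; each statement's English description precedes it below -/
import Mathlib

section
/- S* = −(2nc·φ² + (φ∘A)²). That is, for all X, Y ∈ E, (1/2)·trace(Z ↦ φ(R(X, φY)Z)) = ⟨−(2nc·φ² + (φ∘A)²)X, Y⟩. -/
/-!
Every term of the Gauss equation, composed with `φ`, is a sum of rank-one maps or a multiple of
`φ ∘ φ`, so its trace is explicit: `tr (T ∘ (u ∧ v)) = ⟨v, T u⟩ - ⟨u, T v⟩` and
`tr (φ ∘ φ) = 1 - (2n - 1)`. Skewness of `φ`, symmetry of `A` and `φ³ = -φ` then turn each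
trace into a multiple of `⟨φ² X, Y⟩` or of `⟨(φ A)² X, Y⟩`.
-/

open scoped InnerProductSpace

/-- The wedge operator `(X ∧ Y)Z = ⟨Y,Z⟩X − ⟨X,Z⟩Y`. -/
noncomputable def wedge {E : Type*} [NormedAddCommGroup E] [InnerProductSpace ℝ E]
    (X Y : E) : E →ₗ[ℝ] E where
  toFun Z := ⟪Y, Z⟫_ℝ • X - ⟪X, Z⟫_ℝ • Y
  map_add' Z₁ Z₂ := by simp [inner_add_right, add_smul]; abel
  map_smul' t Z := by simp [inner_smul_right, smul_smul, smul_sub]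

section Wedge

variable {E : Type*} [NormedAddCommGroup E] [InnerProductSpace ℝ E]

lemma inner_apply_apply_of_skew {φ : E →ₗ[ℝ] E} (hφ : ∀ x y : E, ⟪φ x, y⟫_ℝ = -⟪x, φ y⟫_ℝ)
    (X Y : E) : ⟪X, φ (φ Y)⟫_ℝ = ⟪φ (φ X), Y⟫_ℝ := by
  rw [hφ, hφ, neg_neg]

lemma comp_wedge_eq_sub_smulRight (T : E →ₗ[ℝ] E) (u v : E) :
    T ∘ₗ wedge u v = (innerₛₗ ℝ v).smulRight (T u) - (innerₛₗ ℝ u).smulRight (T v) := by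
  ext z
  simp [wedge]

variable [FiniteDimensional ℝ E]

lemma trace_comp_wedge (T : E →ₗ[ℝ] E) (u v : E) :
    LinearMap.trace ℝ E (T ∘ₗ wedge u v) = ⟪v, T u⟫_ℝ - ⟪u, T v⟫_ℝ := by
  simp [comp_wedge_eq_sub_smulRight]

lemma trace_comp_wedge_of_skew_of_isSymmetric {φ B : E →ₗ[ℝ] E}
    (hφ : ∀ x y : E, ⟪φ x, y⟫_ℝ = -⟪x, φ y⟫_ℝ) (hB : B.IsSymmetric) (X Y : E) :
    LinearMap.trace ℝ E (φ ∘ₗ wedge (B X) (B (φ Y))) =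
      -2 * ⟪((φ ∘ₗ B) ∘ₗ (φ ∘ₗ B)) X, Y⟫_ℝ := by
  have h₁ : ⟪((φ ∘ₗ B) ∘ₗ (φ ∘ₗ B)) X, Y⟫_ℝ = -⟪φ (B X), B (φ Y)⟫_ℝ := by
    simp only [LinearMap.comp_apply]
    rw [hφ, ← hB]
  have h₂ : ⟪B X, φ (B (φ Y))⟫_ℝ = -⟪φ (B X), B (φ Y)⟫_ℝ := by
    rw [hφ, neg_neg]
  rw [trace_comp_wedge, h₁, h₂, real_inner_comm]
  ring

lemma trace_comp_wedge_of_skew {φ : E →ₗ[ℝ] E}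
    (hφ : ∀ x y : E, ⟪φ x, y⟫_ℝ = -⟪x, φ y⟫_ℝ) (X Y : E) :
    LinearMap.trace ℝ E (φ ∘ₗ wedge X (φ Y)) = -2 * ⟪φ (φ X), Y⟫_ℝ := by
  simpa using trace_comp_wedge_of_skew_of_isSymmetric hφ LinearMap.IsSymmetric.id X Y

end Wedge

section AlmostContact

variable {E : Type*} [NormedAddCommGroup E] [InnerProductSpace ℝ E]
  {W : E} {φ : E →ₗ[ℝ] E} (hφφ : ∀ X : E, φ (φ X) = -X + ⟪X, W⟫_ℝ • W)
include hφφ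

lemma comp_self_eq_smulRight_sub_id : φ ∘ₗ φ = (innerₛₗ ℝ W).smulRight W - LinearMap.id := by
  ext X
  simp [hφφ X, real_inner_comm]
  abel

lemma trace_comp_self [FiniteDimensional ℝ E] (hW : ‖W‖ = 1) :
    LinearMap.trace ℝ E (φ ∘ₗ φ) = 1 - Module.finrank ℝ E := by
  simp [comp_self_eq_smulRight_sub_id hφφ, hW]

lemma apply_apply_apply_eq_neg (hφW : φ W = 0) (X : E) : φ (φ (φ X)) = -φ X := by
  rw [hφφ X, map_add, map_neg, map_smul, hφW, smul_zero, add_zero]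

end AlmostContact

theorem star_ricci_formula_general
    {n : ℕ} (hn : 2 ≤ n)
    {E : Type*} [NormedAddCommGroup E] [InnerProductSpace ℝ E] [FiniteDimensional ℝ E]
    (hdim : Module.finrank ℝ E = 2 * n - 1)
    (W : E) (hW : ‖W‖ = 1)
    (φ : E →ₗ[ℝ] E) (hφskew : ∀ x y : E, ⟪φ x, y⟫_ℝ = - ⟪x, φ y⟫_ℝ)
    (hφW : φ W = 0) (hφφ : ∀ X : E, φ (φ X) = -X + ⟪X, W⟫_ℝ • W)
    (c : ℝ)
    (A : E →ₗ[ℝ] E) (hA : ∀ x y : E, ⟪A x, y⟫_ℝ = ⟪x, A y⟫_ℝ)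
    (R : E → E → (E →ₗ[ℝ] E))
    (hR : ∀ X Y : E, R X Y =
      wedge (A X) (A Y) + c • (wedge X Y + wedge (φ X) (φ Y) + (2 * ⟪X, φ Y⟫_ℝ) • φ)) :
    ∀ X Y : E,
      (1 / 2 : ℝ) * LinearMap.trace ℝ E (φ ∘ₗ R X (φ Y)) =
        ⟪(-((2 * (n : ℝ) * c) • (φ ∘ₗ φ) + (φ ∘ₗ A) ∘ₗ (φ ∘ₗ A))) X, Y⟫_ℝ := by
  intro X Y
  have htrace_φφ : LinearMap.trace ℝ E (φ ∘ₗ φ) = 2 - 2 * n := by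
    rw [trace_comp_self hφφ hW, hdim, Nat.cast_sub (by omega)]
    push_cast
    ring
  have htrace_wedge_φ :
      LinearMap.trace ℝ E (φ ∘ₗ wedge (φ X) (φ (φ Y))) = -2 * ⟪φ (φ X), Y⟫_ℝ := by
    rw [trace_comp_wedge_of_skew hφskew, apply_apply_apply_eq_neg hφφ hφW, inner_neg_left,
      hφskew, inner_apply_apply_of_skew hφskew]
    ring
  rw [hR, LinearMap.comp_add, LinearMap.comp_smul, LinearMap.comp_add, LinearMap.comp_add,
    LinearMap.comp_smul, map_add, map_smul, map_add, map_add, map_smul,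
    trace_comp_wedge_of_skew_of_isSymmetric hφskew hA, trace_comp_wedge_of_skew hφskew,
    htrace_wedge_φ, htrace_φφ, inner_apply_apply_of_skew hφskew]
  simp only [LinearMap.neg_apply, LinearMap.add_apply, LinearMap.smul_apply, inner_neg_left,
    inner_add_left, real_inner_smul_left, LinearMap.comp_apply, smul_eq_mul]
  ring

/-- S* = −(2nc·φ² + (φ∘A)²), i.e. for all X, Y,
(1/2)·trace(Z ↦ φ(R(X, φY)Z)) = ⟨−(2nc·φ² + (φ∘A)²)X, Y⟩. -/
theorem star_ricci_formula
    {n : ℕ} (hn : 2 ≤ n)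
    {E : Type*} [NormedAddCommGroup E] [InnerProductSpace ℝ E] [FiniteDimensional ℝ E]
    (hdim : Module.finrank ℝ E = 2 * n - 1)
    (W : E) (hW : ‖W‖ = 1)
    (φ : E →ₗ[ℝ] E) (hφskew : ∀ x y : E, ⟪φ x, y⟫_ℝ = - ⟪x, φ y⟫_ℝ)
    (hφW : φ W = 0) (hφφ : ∀ X : E, φ (φ X) = -X + ⟪X, W⟫_ℝ • W)
    (c : ℝ) (hc : c ≠ 0)
    (A : E →ₗ[ℝ] E) (hA : ∀ x y : E, ⟪A x, y⟫_ℝ = ⟪x, A y⟫_ℝ)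
    (R : E → E → (E →ₗ[ℝ] E))
    (hR : ∀ X Y : E, R X Y =
      wedge (A X) (A Y) + c • (wedge X Y + wedge (φ X) (φ Y) + (2 * ⟪X, φ Y⟫_ℝ) • φ)) :
    ∀ X Y : E,
      (1 / 2 : ℝ) * LinearMap.trace ℝ E (φ ∘ₗ R X (φ Y)) =
        ⟪(-((2 * (n : ℝ) * c) • (φ ∘ₗ φ) + (φ ∘ₗ A) ∘ₗ (φ ∘ₗ A))) X, Y⟫_ℝ :=
  star_ricci_formula_general hn hdim W hW φ hφskew hφW hφφ c A hA R hR
end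

section
/- If AW = 0 and the identity A∘φ∘A = c·φ holds (the Hopf identity with Hopf principal curvature α = 0), then for every X ∈ E orthogonal to W one has (φ∘A)²X = −cX and S*X = (2n+1)c·X, and consequently trace S* = 2(n−1)(2n+1)c. In particular the *-Einstein condition ⟨S*X,Y⟩ = (ρ*/(2(n−1)))⟨X,Y⟩ for X,Y ∈ W^⊥ holds with ρ* = trace S*. -/
open scoped InnerProductSpace

/-! Substituting the Hopf identity gives `(φA)² = φ(AφA) = c φ²`, and `φ² = -P` where `P` is
the orthogonal projection onto `W^⊥`. Hence `S* = (2n+1)c P`, which acts as `(2n+1)c` on `W^⊥`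
and has trace `(2n+1)c · dim W^⊥ = (2n+1)c (2n-2)`. -/

theorem LinearMap.comp_comp_eq_smul_comp_of_comp_comp_eq_smul {R M : Type*}
    [CommSemiring R] [AddCommMonoid M] [Module R M] {φ A : M →ₗ[R] M} {c : R}
    (h : A ∘ₗ φ ∘ₗ A = c • φ) : (φ ∘ₗ A) ∘ₗ (φ ∘ₗ A) = c • (φ ∘ₗ φ) := by
  rw [LinearMap.comp_assoc, h, LinearMap.comp_smul]

theorem Submodule.trace_starProjection {𝕜 E : Type*} [RCLike 𝕜] [NormedAddCommGroup E]
    [InnerProductSpace 𝕜 E] [FiniteDimensional 𝕜 E] (K : Submodule 𝕜 E) :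
    LinearMap.trace 𝕜 E (K.starProjection : E →ₗ[𝕜] E) = Module.finrank 𝕜 K :=
  LinearMap.IsProj.trace ⟨K.starProjection_apply_mem, fun _ => K.starProjection_eq_self_iff.mpr⟩

theorem comp_self_eq_neg_starProjection_orthogonal {E : Type*} [NormedAddCommGroup E]
    [InnerProductSpace ℝ E] {W : E} {φ : E →ₗ[ℝ] E} (hW : ‖W‖ = 1)
    (hφφ : ∀ X : E, φ (φ X) = -X + ⟪X, W⟫_ℝ • W) :
    φ ∘ₗ φ = -((ℝ ∙ W)ᗮ.starProjection : E →ₗ[ℝ] E) := by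
  ext X
  simp [hφφ, Submodule.starProjection_unit_singleton ℝ hW, real_inner_comm, neg_add_eq_sub]

theorem hopf_alpha_zero_star_einstein_general
    {n : ℕ} (hn : 2 ≤ n)
    {E : Type*} [NormedAddCommGroup E] [InnerProductSpace ℝ E] [FiniteDimensional ℝ E]
    (hdim : Module.finrank ℝ E = 2 * n - 1)
    (W : E) (hW : ‖W‖ = 1)
    (φ : E →ₗ[ℝ] E)
    (hφφ : ∀ X : E, φ (φ X) = -X + ⟪X, W⟫_ℝ • W)
    (c : ℝ)
    (A : E →ₗ[ℝ] E)
    (hHopf : A ∘ₗ φ ∘ₗ A = c • φ)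
    (Sstar : E →ₗ[ℝ] E)
    (hS : Sstar = -((2 * (n : ℝ) * c) • (φ ∘ₗ φ) + (φ ∘ₗ A) ∘ₗ (φ ∘ₗ A))) :
    (∀ X : E, ⟪X, W⟫_ℝ = 0 →
        ((φ ∘ₗ A) ∘ₗ (φ ∘ₗ A)) X = (-c) • X ∧ Sstar X = ((2 * (n : ℝ) + 1) * c) • X) ∧
    LinearMap.trace ℝ E Sstar = 2 * ((n : ℝ) - 1) * (2 * (n : ℝ) + 1) * c ∧
    (∀ X Y : E, ⟪X, W⟫_ℝ = 0 → ⟪Y, W⟫_ℝ = 0 →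
        ⟪Sstar X, Y⟫_ℝ = (LinearMap.trace ℝ E Sstar / (2 * ((n : ℝ) - 1))) * ⟪X, Y⟫_ℝ) := by
  set P : E →ₗ[ℝ] E := (ℝ ∙ W)ᗮ.starProjection
  have hφ2 : φ ∘ₗ φ = -P := comp_self_eq_neg_starProjection_orthogonal hW hφφ
  have hsq : (φ ∘ₗ A) ∘ₗ (φ ∘ₗ A) = (-c) • P := by
    rw [LinearMap.comp_comp_eq_smul_comp_of_comp_comp_eq_smul hHopf, hφ2, smul_neg,
      neg_smul]
  have hSP : Sstar = ((2 * (n : ℝ) + 1) * c) • P := by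
    rw [hS, hsq, hφ2]
    module
  have hPX (X : E) (hX : ⟪X, W⟫_ℝ = 0) : P X = X :=
    Submodule.starProjection_eq_self_iff.mpr
      (Submodule.mem_orthogonal_singleton_iff_inner_left.mpr hX)
  have hrank : Module.finrank ℝ (ℝ ∙ W)ᗮ = 2 * n - 2 := by
    have : Fact (Module.finrank ℝ E = (2 * n - 2) + 1) := ⟨by omega⟩
    exact Submodule.finrank_orthogonal_span_singleton (norm_ne_zero_iff.mp (by simp [hW]))
  have htrace : LinearMap.trace ℝ E Sstar = 2 * ((n : ℝ) - 1) * (2 * (n : ℝ) + 1) * c := by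
    rw [hSP, map_smul, Submodule.trace_starProjection, hrank, Nat.cast_sub (by omega),
      smul_eq_mul]
    push_cast
    ring
  have hn1 : (n : ℝ) - 1 ≠ 0 := sub_ne_zero.mpr (by norm_cast; omega)
  refine ⟨fun X hX => ⟨?_, ?_⟩, htrace, fun X Y hX _ => ?_⟩
  · rw [hsq, LinearMap.smul_apply, hPX X hX]
  · rw [hSP, LinearMap.smul_apply, hPX X hX]
  · rw [htrace, hSP, LinearMap.smul_apply, hPX X hX, real_inner_smul_left]
    field_simp

/-- if AW = 0 and A∘φ∘A = cφ (the Hopf identity with α = 0), then for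
X ⊥ W one has (φ∘A)²X = −cX and S*X = (2n+1)c·X, trace S* = 2(n−1)(2n+1)c, and the
*-Einstein condition holds with ρ* = trace S*. -/
theorem hopf_alpha_zero_star_einstein
    {n : ℕ} (hn : 2 ≤ n)
    {E : Type*} [NormedAddCommGroup E] [InnerProductSpace ℝ E] [FiniteDimensional ℝ E]
    (hdim : Module.finrank ℝ E = 2 * n - 1)
    (W : E) (hW : ‖W‖ = 1)
    (φ : E →ₗ[ℝ] E) (hφskew : ∀ x y : E, ⟪φ x, y⟫_ℝ = - ⟪x, φ y⟫_ℝ)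
    (hφW : φ W = 0) (hφφ : ∀ X : E, φ (φ X) = -X + ⟪X, W⟫_ℝ • W)
    (c : ℝ) (hc : c ≠ 0)
    (A : E →ₗ[ℝ] E) (hA : ∀ x y : E, ⟪A x, y⟫_ℝ = ⟪x, A y⟫_ℝ)
    (hAW : A W = 0)
    (hHopf : A ∘ₗ φ ∘ₗ A = c • φ)
    (Sstar : E →ₗ[ℝ] E)
    (hS : Sstar = -((2 * (n : ℝ) * c) • (φ ∘ₗ φ) + (φ ∘ₗ A) ∘ₗ (φ ∘ₗ A))) :
    (∀ X : E, ⟪X, W⟫_ℝ = 0 →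
        ((φ ∘ₗ A) ∘ₗ (φ ∘ₗ A)) X = (-c) • X ∧ Sstar X = ((2 * (n : ℝ) + 1) * c) • X) ∧
    LinearMap.trace ℝ E Sstar = 2 * ((n : ℝ) - 1) * (2 * (n : ℝ) + 1) * c ∧
    (∀ X Y : E, ⟪X, W⟫_ℝ = 0 → ⟪Y, W⟫_ℝ = 0 →
        ⟪Sstar X, Y⟫_ℝ = (LinearMap.trace ℝ E Sstar / (2 * ((n : ℝ) - 1))) * ⟪X, Y⟫_ℝ) :=
  hopf_alpha_zero_star_einstein_general hn hdim W hW φ hφφ c A hHopf Sstar hS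
end

section
/- Suppose AW = αW, the Hopf identity A∘φ∘A = (α/2)(A∘φ + φ∘A) + c·φ holds, and α² + 4c ≠ 0. Then α/2 is not an eigenvalue of A on W^⊥: there is no nonzero X ∈ W^⊥ with AX = (α/2)X. -/
open scoped InnerProductSpace

/-! Applying the Hopf identity to an eigenvector `X ⊥ W` of `A` for `α/2` cancels the `A φ X`
terms and leaves `(α²/4 + c) φ X = 0`, so `φ X = 0`; but `φ² = -1` on `W^⊥`, hence `X = 0`. -/

theorem hopf_apply_eigenvector_eq_zero {R M : Type*} [CommRing R] [AddCommGroup M] [Module R M]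
    (A φ : M →ₗ[R] M) (a c : R) (hHopf : A ∘ₗ φ ∘ₗ A = a • (A ∘ₗ φ + φ ∘ₗ A) + c • φ)
    {X : M} (hAX : A X = a • X) : (a * a + c) • φ X = 0 := by
  have h := LinearMap.congr_fun hHopf X
  simp only [LinearMap.comp_apply, LinearMap.add_apply, LinearMap.smul_apply, hAX,
    map_smul] at h
  rw [smul_add, smul_smul, add_assoc, left_eq_add] at h
  rwa [add_smul]

theorem eq_zero_of_map_eq_zero_of_inner_eq_zero {E : Type*} [NormedAddCommGroup E]
    [InnerProductSpace ℝ E] {W : E} {φ : E →ₗ[ℝ] E}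
    (hφφ : ∀ X : E, φ (φ X) = -X + ⟪X, W⟫_ℝ • W) {X : E} (hφX : φ X = 0)
    (hXW : ⟪X, W⟫_ℝ = 0) : X = 0 := by
  simpa [hφX, hXW] using (hφφ X).symm

theorem hopf_half_alpha_not_eigenvalue_general
    {E : Type*} [NormedAddCommGroup E] [InnerProductSpace ℝ E]
    (W : E)
    (φ : E →ₗ[ℝ] E)
    (hφφ : ∀ X : E, φ (φ X) = -X + ⟪X, W⟫_ℝ • W)
    (c : ℝ)
    (A : E →ₗ[ℝ] E)
    (α : ℝ)
    (hHopf : A ∘ₗ φ ∘ₗ A = (α / 2) • (A ∘ₗ φ + φ ∘ₗ A) + c • φ)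
    (hαc : α ^ 2 + 4 * c ≠ 0) :
    ¬ ∃ X : E, X ≠ 0 ∧ ⟪X, W⟫_ℝ = 0 ∧ A X = (α / 2) • X := by
  rintro ⟨X, hX0, hXW, hAX⟩
  have hcoeff : α / 2 * (α / 2) + c ≠ 0 := fun h ↦ hαc (by linarith)
  have hφX : φ X = 0 :=
    (smul_eq_zero.mp (hopf_apply_eigenvector_eq_zero A φ _ c hHopf hAX)).resolve_left hcoeff
  exact hX0 (eq_zero_of_map_eq_zero_of_inner_eq_zero hφφ hφX hXW)

/-- on a Hopf hypersurface with α² + 4c ≠ 0, the value α/2 is not an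
eigenvalue of A on W^⊥. -/
theorem hopf_half_alpha_not_eigenvalue
    {n : ℕ} (hn : 2 ≤ n)
    {E : Type*} [NormedAddCommGroup E] [InnerProductSpace ℝ E] [FiniteDimensional ℝ E]
    (hdim : Module.finrank ℝ E = 2 * n - 1)
    (W : E) (hW : ‖W‖ = 1)
    (φ : E →ₗ[ℝ] E) (hφskew : ∀ x y : E, ⟪φ x, y⟫_ℝ = - ⟪x, φ y⟫_ℝ)
    (hφW : φ W = 0) (hφφ : ∀ X : E, φ (φ X) = -X + ⟪X, W⟫_ℝ • W)
    (c : ℝ) (hc : c ≠ 0)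
    (A : E →ₗ[ℝ] E) (hA : ∀ x y : E, ⟪A x, y⟫_ℝ = ⟪x, A y⟫_ℝ)
    (α : ℝ) (hAW : A W = α • W)
    (hHopf : A ∘ₗ φ ∘ₗ A = (α / 2) • (A ∘ₗ φ + φ ∘ₗ A) + c • φ)
    (hαc : α ^ 2 + 4 * c ≠ 0) :
    ¬ ∃ X : E, X ≠ 0 ∧ ⟪X, W⟫_ℝ = 0 ∧ A X = (α / 2) • X :=
  hopf_half_alpha_not_eigenvalue_general W φ hφφ c A α hHopf hαc
end

section
/- Suppose AW = αW, the Hopf identity A∘φ∘A = (α/2)(A∘φ + φ∘A) + c·φ holds, and α² + 4c = 0. If X ∈ W^⊥ is nonzero with AX = λX and λ ≠ α/2, then A(φX) = (α/2)·φX. -/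
open scoped InnerProductSpace

/-- on a Hopf hypersurface with α² + 4c = 0, if X ∈ W^⊥ is nonzero with
AX = λX and λ ≠ α/2, then A(φX) = (α/2)·φX. -/
theorem hopf_exceptional_phi_principal
    {n : ℕ} (hn : 2 ≤ n)
    {E : Type*} [NormedAddCommGroup E] [InnerProductSpace ℝ E] [FiniteDimensional ℝ E]
    (hdim : Module.finrank ℝ E = 2 * n - 1)
    (W : E) (hW : ‖W‖ = 1)
    (φ : E →ₗ[ℝ] E) (hφskew : ∀ x y : E, ⟪φ x, y⟫_ℝ = - ⟪x, φ y⟫_ℝ)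
    (hφW : φ W = 0) (hφφ : ∀ X : E, φ (φ X) = -X + ⟪X, W⟫_ℝ • W)
    (c : ℝ)
    (A : E →ₗ[ℝ] E) (hA : ∀ x y : E, ⟪A x, y⟫_ℝ = ⟪x, A y⟫_ℝ)
    (α : ℝ) (hAW : A W = α • W)
    (hHopf : A ∘ₗ φ ∘ₗ A = (α / 2) • (A ∘ₗ φ + φ ∘ₗ A) + c • φ)
    (hαc : α ^ 2 + 4 * c = 0)
    (X : E) (hX0 : X ≠ 0) (hXW : ⟪X, W⟫_ℝ = 0)
    (lam : ℝ) (hAX : A X = lam • X) (hlam : lam ≠ α / 2) :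
    A (φ X) = (α / 2) • φ X := by
  have h := LinearMap.congr_fun hHopf X
  simp only [LinearMap.comp_apply, LinearMap.add_apply, LinearMap.smul_apply, hAX,
    map_smul] at h
  -- h : A (φ (lam • X)) ... need careful
  have key : (lam - α / 2) • A (φ X) = (lam - α / 2) • ((α / 2) • φ X) := by
    have hc : c = -(α ^ 2) / 4 := by linarith
    rw [hc] at h
    rw [sub_smul, sub_smul]
    rw [smul_smul, smul_smul]
    rw [smul_add] at h
    rw [h]
    module
  have hne : lam - α / 2 ≠ 0 := sub_ne_zero.mpr hlam
  exact smul_right_injective E hne key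
end

section
/- (RS − SR)X and (RS − SR)Y are scalar multiples of W if and only if both μ(β²ν − α(4c + λν − μ²)) = 0 and β²(μ² − ν²) = (4c + λν − μ²)(α(λ − ν) − β²). -/
open Matrix

/-- The wedge operator `(u ∧ v)w = ⟨v,w⟩u − ⟨u,w⟩v` as a 3×3 matrix. -/
def wedge3 (u v : Fin 3 → ℝ) : Matrix (Fin 3) (Fin 3) ℝ :=
  Matrix.vecMulVec u v - Matrix.vecMulVec v u

/-!
In the frame `(W, X, Y)` the Gauss equation makes `R = R(X,Y)` skew-symmetric, with entries
`βμ, βν` in the `W`-row and `κ = 4c + λν − μ²` in position `(X, Y)`, while the Ricci operator `S`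
is symmetric. Hence `[R, S] = RS − SR` is symmetric, and pseudo-Ryan means that its `XY`-block
vanishes. That block is `[R,S]_XX = −[R,S]_YY = −2μ(β²ν − ακ)` and
`[R,S]_XY = [R,S]_YX = κ(S_YY − S_XX) + β²(μ² − ν²)` with `S_YY − S_XX = α(ν − λ) + β²`.
-/

section Matrix3

variable {R : Type*}

def skew3 [Zero R] [Neg R] (a b k : R) : Matrix (Fin 3) (Fin 3) R :=
  !![0, a, b; -a, 0, k; -b, -k, 0]

def symm3 (p q r s t u : R) : Matrix (Fin 3) (Fin 3) R :=
  !![p, q, r; q, s, t; r, t, u]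

theorem skew3_mul_symm3_sub_symm3_mul_skew3 [CommRing R] (a b k p q r s t u : R) :
    skew3 a b k * symm3 p q r s t u - symm3 p q r s t u * skew3 a b k =
      symm3 (2 * (a * q + b * r)) (a * (s - p) + b * t + k * r) (a * t + b * (u - p) - k * q)
        (2 * (k * t - a * q)) (k * (u - s) - a * r - b * q) (-2 * (b * r + k * t)) := by
  ext i j
  fin_cases i <;> fin_cases j <;> simp [skew3, symm3] <;> ring

variable [NonAssocSemiring R]

theorem symm3_mulVec_e1 (p q r s t u : R) : symm3 p q r s t u *ᵥ ![0, 1, 0] = ![q, s, t] := by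
  ext i
  fin_cases i <;> simp [symm3, mulVec, dotProduct, Fin.sum_univ_three]

theorem symm3_mulVec_e2 (p q r s t u : R) : symm3 p q r s t u *ᵥ ![0, 0, 1] = ![r, t, u] := by
  ext i
  fin_cases i <;> simp [symm3, mulVec, dotProduct, Fin.sum_univ_three]

theorem exists_vec3_eq_smul_e0_iff (x y z : R) :
    (∃ t : R, ![x, y, z] = t • ![1, 0, 0]) ↔ y = 0 ∧ z = 0 := by
  constructor
  · rintro ⟨t, h⟩
    exact ⟨by simpa using congrFun h 1, by simpa using congrFun h 2⟩
  · rintro ⟨rfl, rfl⟩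
    exact ⟨x, by simp⟩

end Matrix3

theorem gauss_curvature_eq_skew3 {α β lam μ ν c : ℝ} {A φ : Matrix (Fin 3) (Fin 3) ℝ}
    (hA : A = !![α, β, 0; β, lam, μ; 0, μ, ν]) (hφ : φ = !![0, 0, 0; 0, 0, -1; 0, 1, 0]) :
    wedge3 (A *ᵥ ![0, 1, 0]) (A *ᵥ ![0, 0, 1])
        + c • (wedge3 ![0, 1, 0] ![0, 0, 1] + wedge3 (φ *ᵥ ![0, 1, 0]) (φ *ᵥ ![0, 0, 1])
          + (2 * (![0, 1, 0] ⬝ᵥ φ *ᵥ ![0, 0, 1])) • φ) =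
      skew3 (β * μ) (β * ν) (4 * c + lam * ν - μ ^ 2) := by
  subst hA hφ
  ext i j
  fin_cases i <;> fin_cases j <;>
    simp [skew3, wedge3, mulVec, vecMulVec_apply, dotProduct, Fin.sum_univ_three] <;> ring

theorem ricci_eq_symm3 {α β lam μ ν c : ℝ} {A : Matrix (Fin 3) (Fin 3) ℝ}
    (hA : A = !![α, β, 0; β, lam, μ; 0, μ, ν]) :
    (5 * c) • (1 : Matrix (Fin 3) (Fin 3) ℝ) - (3 * c) • vecMulVec ![1, 0, 0] ![1, 0, 0]
        + (α + lam + ν) • A - A * A =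
      symm3 (2 * c - β ^ 2 + α * (lam + ν)) (β * ν) (-(β * μ))
        (5 * c + lam * ν - μ ^ 2 + α * lam - β ^ 2) (α * μ) (5 * c + lam * ν - μ ^ 2 + α * ν) := by
  subst hA
  ext i j
  fin_cases i <;> fin_cases j <;> simp [symm3, one_apply] <;> ring

theorem pseudo_ryan_criteria_general
    (α β lam μ ν c : ℝ)
    (W X Y : Fin 3 → ℝ)
    (hWdef : W = ![1, 0, 0]) (hXdef : X = ![0, 1, 0]) (hYdef : Y = ![0, 0, 1])
    (A φ S R : Matrix (Fin 3) (Fin 3) ℝ)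
    (hA : A = !![α, β, 0; β, lam, μ; 0, μ, ν])
    (hφ : φ = !![0, 0, 0; 0, 0, -1; 0, 1, 0])
    (hS : S = (5 * c) • (1 : Matrix (Fin 3) (Fin 3) ℝ) - (3 * c) • Matrix.vecMulVec W W
        + (α + lam + ν) • A - A * A)
    (hR : R = wedge3 (A.mulVec X) (A.mulVec Y)
        + c • (wedge3 X Y + wedge3 (φ.mulVec X) (φ.mulVec Y) + (2 * (X ⬝ᵥ φ.mulVec Y)) • φ)) :
    ((∃ t : ℝ, (R * S - S * R).mulVec X = t • W) ∧
     (∃ t : ℝ, (R * S - S * R).mulVec Y = t • W)) ↔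
    (μ * (β ^ 2 * ν - α * (4 * c + lam * ν - μ ^ 2)) = 0 ∧
     β ^ 2 * (μ ^ 2 - ν ^ 2) = (4 * c + lam * ν - μ ^ 2) * (α * (lam - ν) - β ^ 2)) := by
  subst hWdef hXdef hYdef
  rw [hR, gauss_curvature_eq_skew3 hA hφ, hS, ricci_eq_symm3 hA,
    skew3_mul_symm3_sub_symm3_mul_skew3, symm3_mulVec_e1, symm3_mulVec_e2,
    exists_vec3_eq_smul_e0_iff, exists_vec3_eq_smul_e0_iff]
  constructor
  · rintro ⟨⟨hXX, hXY⟩, -⟩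
    exact ⟨by linear_combination -hXX / 2, by linear_combination hXY⟩
  · rintro ⟨h1, h2⟩
    exact ⟨⟨by linear_combination -2 * h1, by linear_combination h2⟩,
      by linear_combination h2, by linear_combination 2 * h1⟩

/-- (RS − SR)X and (RS − SR)Y are multiples of W iff
μ(β²ν − α(4c + λν − μ²)) = 0 and β²(μ² − ν²) = (4c + λν − μ²)(α(λ − ν) − β²). -/
theorem pseudo_ryan_criteria
    (α β lam μ ν c : ℝ) (hc : c ≠ 0)
    (W X Y : Fin 3 → ℝ)
    (hWdef : W = ![1, 0, 0]) (hXdef : X = ![0, 1, 0]) (hYdef : Y = ![0, 0, 1])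
    (A φ S R : Matrix (Fin 3) (Fin 3) ℝ)
    (hA : A = !![α, β, 0; β, lam, μ; 0, μ, ν])
    (hφ : φ = !![0, 0, 0; 0, 0, -1; 0, 1, 0])
    (hS : S = (5 * c) • (1 : Matrix (Fin 3) (Fin 3) ℝ) - (3 * c) • Matrix.vecMulVec W W
        + (α + lam + ν) • A - A * A)
    (hR : R = wedge3 (A.mulVec X) (A.mulVec Y)
        + c • (wedge3 X Y + wedge3 (φ.mulVec X) (φ.mulVec Y) + (2 * (X ⬝ᵥ φ.mulVec Y)) • φ)) :
    ((∃ t : ℝ, (R * S - S * R).mulVec X = t • W) ∧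
     (∃ t : ℝ, (R * S - S * R).mulVec Y = t • W)) ↔
    (μ * (β ^ 2 * ν - α * (4 * c + lam * ν - μ ^ 2)) = 0 ∧
     β ^ 2 * (μ ^ 2 - ν ^ 2) = (4 * c + lam * ν - μ ^ 2) * (α * (lam - ν) - β ^ 2)) :=
  pseudo_ryan_criteria_general α β lam μ ν c W X Y hWdef hXdef hYdef A φ S R hA hφ hS hR
end

section
/- Assume β ≠ 0. Then (RS − SR)X and (RS − SR)Y are scalar multiples of W if and only if μ = 0 and β²ν² = −(4c + λν)(α(λ − ν) − β²). -/
open Matrix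

lemma exists_eq_smul_e0_iff {𝕜 : Type*} [Semiring 𝕜] (v : Fin 3 → 𝕜) :
    (∃ t : 𝕜, v = t • ![1, 0, 0]) ↔ v 1 = 0 ∧ v 2 = 0 := by
  constructor
  · rintro ⟨t, rfl⟩
    simp
  · rintro ⟨h1, h2⟩
    refine ⟨v 0, ?_⟩
    ext i
    fin_cases i <;> simp [h1, h2]

def curvatureMatrix (β lam μ ν c : ℝ) : Matrix (Fin 3) (Fin 3) ℝ :=
  !![0, β * μ, β * ν;
    -(β * μ), 0, 4 * c + lam * ν - μ ^ 2;
    -(β * ν), -(4 * c + lam * ν - μ ^ 2), 0]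

def ricciMatrix (α β lam μ ν c : ℝ) : Matrix (Fin 3) (Fin 3) ℝ :=
  !![2 * c + α * (lam + ν) - β ^ 2, β * ν, -(β * μ);
    β * ν, 5 * c + lam * (α + ν) - β ^ 2 - μ ^ 2, α * μ;
    -(β * μ), α * μ, 5 * c + ν * (α + lam) - μ ^ 2]

lemma curvature_eq_curvatureMatrix {α β lam μ ν c : ℝ} {A φ : Matrix (Fin 3) (Fin 3) ℝ}
    (hA : A = !![α, β, 0; β, lam, μ; 0, μ, ν]) (hφ : φ = !![0, 0, 0; 0, 0, -1; 0, 1, 0]) :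
    wedge3 (A *ᵥ ![0, 1, 0]) (A *ᵥ ![0, 0, 1]) + c • (wedge3 ![0, 1, 0] ![0, 0, 1]
        + wedge3 (φ *ᵥ ![0, 1, 0]) (φ *ᵥ ![0, 0, 1]) + (2 * (![0, 1, 0] ⬝ᵥ φ *ᵥ ![0, 0, 1])) • φ)
      = curvatureMatrix β lam μ ν c := by
  subst hA hφ
  ext i j
  fin_cases i <;> fin_cases j <;>
    simp [curvatureMatrix, wedge3, vecMulVec_apply, mulVec, dotProduct, Fin.sum_univ_three] <;>
    ring

lemma ricci_eq_ricciMatrix {α β lam μ ν c : ℝ} {A : Matrix (Fin 3) (Fin 3) ℝ}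
    (hA : A = !![α, β, 0; β, lam, μ; 0, μ, ν]) :
    (5 * c) • (1 : Matrix (Fin 3) (Fin 3) ℝ) - (3 * c) • vecMulVec ![1, 0, 0] ![1, 0, 0]
        + (α + lam + ν) • A - A * A
      = ricciMatrix α β lam μ ν c := by
  subst hA
  ext i j
  fin_cases i <;> fin_cases j <;> simp [ricciMatrix, one_apply] <;> ring

lemma curvatureMatrix_mul_ricciMatrix_sub (α β lam μ ν c : ℝ) :
    curvatureMatrix β lam μ ν c * ricciMatrix α β lam μ ν c
        - ricciMatrix α β lam μ ν c * curvatureMatrix β lam μ ν c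
      = !![0, -(c * β * μ), β * (α * μ ^ 2 + ν * (β ^ 2 - α * lam - c));
          -(c * β * μ), 2 * (μ * (α * (4 * c + lam * ν - μ ^ 2) - β ^ 2 * ν)),
            β ^ 2 * (μ ^ 2 - ν ^ 2) - (4 * c + lam * ν - μ ^ 2) * (α * (lam - ν) - β ^ 2);
          β * (α * μ ^ 2 + ν * (β ^ 2 - α * lam - c)),
            β ^ 2 * (μ ^ 2 - ν ^ 2) - (4 * c + lam * ν - μ ^ 2) * (α * (lam - ν) - β ^ 2),
            -(2 * (μ * (α * (4 * c + lam * ν - μ ^ 2) - β ^ 2 * ν)))] := by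
  ext i j
  fin_cases i <;> fin_cases j <;>
    simp [curvatureMatrix, ricciMatrix] <;> ring

lemma pseudo_ryan_equations_iff {α β lam μ ν c : ℝ} (hc : c ≠ 0) (hβ : β ≠ 0) :
    (μ * (α * (4 * c + lam * ν - μ ^ 2) - β ^ 2 * ν) = 0 ∧
        β ^ 2 * (μ ^ 2 - ν ^ 2) - (4 * c + lam * ν - μ ^ 2) * (α * (lam - ν) - β ^ 2) = 0) ↔
      μ = 0 ∧ β ^ 2 * ν ^ 2 = -(4 * c + lam * ν) * (α * (lam - ν) - β ^ 2) := by
  constructor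
  · rintro ⟨hP, hQ⟩
    rcases mul_eq_zero.1 hP with hμ | hK
    · subst hμ
      exact ⟨rfl, by linear_combination -hQ⟩
    · have : β ^ 2 * c = 0 := by linear_combination (hQ + (lam - ν) * hK) / 4
      exact absurd this (mul_ne_zero (pow_ne_zero 2 hβ) hc)
  · rintro ⟨rfl, h⟩
    exact ⟨by ring, by linear_combination -h⟩

/-- if β ≠ 0, then (RS − SR)X and (RS − SR)Y are multiples of W iff
μ = 0 and β²ν² = −(4c + λν)(α(λ − ν) − β²). -/
theorem pseudo_ryan_refined
    (α β lam μ ν c : ℝ) (hc : c ≠ 0) (hβ : β ≠ 0)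
    (W X Y : Fin 3 → ℝ)
    (hWdef : W = ![1, 0, 0]) (hXdef : X = ![0, 1, 0]) (hYdef : Y = ![0, 0, 1])
    (A φ S R : Matrix (Fin 3) (Fin 3) ℝ)
    (hA : A = !![α, β, 0; β, lam, μ; 0, μ, ν])
    (hφ : φ = !![0, 0, 0; 0, 0, -1; 0, 1, 0])
    (hS : S = (5 * c) • (1 : Matrix (Fin 3) (Fin 3) ℝ) - (3 * c) • Matrix.vecMulVec W W
        + (α + lam + ν) • A - A * A)
    (hR : R = wedge3 (A.mulVec X) (A.mulVec Y)
        + c • (wedge3 X Y + wedge3 (φ.mulVec X) (φ.mulVec Y) + (2 * (X ⬝ᵥ φ.mulVec Y)) • φ)) :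
    ((∃ t : ℝ, (R * S - S * R).mulVec X = t • W) ∧
     (∃ t : ℝ, (R * S - S * R).mulVec Y = t • W)) ↔
    (μ = 0 ∧ β ^ 2 * ν ^ 2 = -(4 * c + lam * ν) * (α * (lam - ν) - β ^ 2)) := by
  subst hWdef hXdef hYdef hR hS
  rw [curvature_eq_curvatureMatrix hA hφ, ricci_eq_ricciMatrix hA,
    curvatureMatrix_mul_ricciMatrix_sub, exists_eq_smul_e0_iff, exists_eq_smul_e0_iff,
    ← pseudo_ryan_equations_iff hc hβ]
  simp only [mulVec, dotProduct, Fin.sum_univ_three, cons_val, of_apply, mul_zero, mul_one,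
    add_zero, zero_add, neg_eq_zero, mul_eq_zero_iff_left (two_ne_zero' ℝ)]
  tauto
end

section
/- Assume β = 0 and μ = 0 (the Hopf case). Then (RS − SR)X and (RS − SR)Y are scalar multiples of W if and only if α(4c + λν)(λ − ν) = 0. -/
open Matrix

set_option maxHeartbeats 1000000

/-- in the Hopf case β = 0, μ = 0, (RS − SR)X and (RS − SR)Y are
multiples of W iff α(4c + λν)(λ − ν) = 0. -/
theorem pseudo_ryan_hopf_case
    (α β lam μ ν c : ℝ) (hc : c ≠ 0) (hβ : β = 0) (hμ : μ = 0)
    (W X Y : Fin 3 → ℝ)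
    (hWdef : W = ![1, 0, 0]) (hXdef : X = ![0, 1, 0]) (hYdef : Y = ![0, 0, 1])
    (A φ S R : Matrix (Fin 3) (Fin 3) ℝ)
    (hA : A = !![α, β, 0; β, lam, μ; 0, μ, ν])
    (hφ : φ = !![0, 0, 0; 0, 0, -1; 0, 1, 0])
    (hS : S = (5 * c) • (1 : Matrix (Fin 3) (Fin 3) ℝ) - (3 * c) • Matrix.vecMulVec W W
        + (α + lam + ν) • A - A * A)
    (hR : R = wedge3 (A.mulVec X) (A.mulVec Y)
        + c • (wedge3 X Y + wedge3 (φ.mulVec X) (φ.mulVec Y) + (2 * (X ⬝ᵥ φ.mulVec Y)) • φ)) :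
    ((∃ t : ℝ, (R * S - S * R).mulVec X = t • W) ∧
     (∃ t : ℝ, (R * S - S * R).mulVec Y = t • W)) ↔
    α * (4 * c + lam * ν) * (lam - ν) = 0 := by
  subst hβ hμ hWdef hXdef hYdef hA hφ
  obtain ⟨e, he⟩ : ∃ e : ℝ, e = (lam * ν + 4 * c) * (α * (ν - lam)) := ⟨_, rfl⟩
  have hSval : S = !![2*c + α*(lam+ν), 0, 0; 0, 5*c + lam*(α+ν), 0; 0, 0, 5*c + ν*(α+lam)] := by
    subst hS
    ext i j
    fin_cases i <;> fin_cases j <;>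
      simp [Matrix.mul_apply, Matrix.vecMulVec_apply, Fin.sum_univ_three,
        Matrix.one_apply, Matrix.vecHead, Matrix.vecTail] <;> ring
  have hRval : R = !![0, 0, 0; 0, 0, lam*ν + 4*c; 0, -(lam*ν + 4*c), 0] := by
    subst hR
    ext i j
    fin_cases i <;> fin_cases j <;>
      simp [wedge3, Matrix.mulVec, Matrix.vecMulVec_apply, dotProduct,
        Fin.sum_univ_three, Matrix.vecHead, Matrix.vecTail] <;> (try ring) <;> rfl
  have hC : R * S - S * R = !![0, 0, 0; 0, 0, e; 0, e, 0] := by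
    rw [hSval, hRval, Matrix.mul_fin_three, Matrix.mul_fin_three]
    ext i j
    fin_cases i <;> fin_cases j <;>
      simp [Matrix.sub_apply, he] <;> (try ring) <;> rfl
  rw [hC]
  have hX : (!![0, 0, 0; 0, 0, e; 0, e, 0] : Matrix (Fin 3) (Fin 3) ℝ).mulVec ![0,1,0]
      = ![0, 0, e] := by
    funext i; fin_cases i <;> simp [Matrix.mulVec, dotProduct, Fin.sum_univ_three]
  have hY : (!![0, 0, 0; 0, 0, e; 0, e, 0] : Matrix (Fin 3) (Fin 3) ℝ).mulVec ![0,0,1]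
      = ![0, e, 0] := by
    funext i; fin_cases i <;> simp [Matrix.mulVec, dotProduct, Fin.sum_univ_three]
  rw [hX, hY]
  constructor
  · rintro ⟨⟨t, ht⟩, -⟩
    have h2 := congrFun ht 2
    simp at h2
    rw [he] at h2
    linear_combination -h2
  · intro h
    have he0 : e = 0 := by rw [he]; linear_combination -h
    constructor <;> refine ⟨0, ?_⟩ <;> funext i <;> fin_cases i <;> simp [he0]
end

section
/- Assume β ≠ 0, μ = 0, the matrix A has rank at least 2, and the pseudo-Ryan equation β²ν² = −(4c + λν)(α(λ − ν) − β²) holds. Then 4c + λν ≠ 0, and exactly one of the following holds: (i) λ = 0, ν ≠ 0, and β²(ν² − 4c) = 4cαν; or (ii) λν ≠ 0 and, setting σ = −λν, one has β²ν² = (4c − σ)(α(ν + σ/ν) + β²). -/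
open Matrix

lemma rank1_aux (α β lam : ℝ) (hlam : lam ≠ 0) (h : α * lam = β ^ 2) :
    (!![α, β, 0; β, lam, 0; 0, 0, 0] : Matrix (Fin 3) (Fin 3) ℝ).rank ≤ 1 := by
  have hfac : (!![α, β, 0; β, lam, 0; 0, 0, 0] : Matrix (Fin 3) (Fin 3) ℝ)
      = (!![β / lam; 1; 0] : Matrix (Fin 3) (Fin 1) ℝ) * !![β, lam, 0] := by
    have hα : α = β * β / lam := by field_simp; nlinarith [h]
    ext i j
    fin_cases i <;> fin_cases j <;>
      simp [Matrix.mul_apply, Fin.sum_univ_succ, hα, Matrix.vecHead, Matrix.vecTail] <;>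
      try field_simp
  calc (!![α, β, 0; β, lam, 0; 0, 0, 0] : Matrix (Fin 3) (Fin 3) ℝ).rank
      ≤ (!![β / lam; 1; 0] : Matrix (Fin 3) (Fin 1) ℝ).rank := by
        rw [hfac]; exact Matrix.rank_mul_le_left _ _
    _ ≤ 1 := by simpa using Matrix.rank_le_card_width (!![β / lam; 1; 0] : Matrix (Fin 3) (Fin 1) ℝ)

/-- if β ≠ 0, μ = 0, rank A ≥ 2 and the pseudo-Ryan equation
β²ν² = −(4c + λν)(α(λ − ν) − β²) holds, then 4c + λν ≠ 0, and exactly one of: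
(i) λ = 0, ν ≠ 0 and β²(ν² − 4c) = 4cαν; or (ii) λν ≠ 0 and, with σ = −λν,
β²ν² = (4c − σ)(α(ν + σ/ν) + β²). -/
theorem pseudo_ryan_star_einstein_dichotomy
    (α β lam μ ν c : ℝ) (hc : c ≠ 0) (hβ : β ≠ 0) (hμ : μ = 0)
    (A : Matrix (Fin 3) (Fin 3) ℝ)
    (hA : A = !![α, β, 0; β, lam, μ; 0, μ, ν])
    (hrank : 2 ≤ A.rank)
    (hPR : β ^ 2 * ν ^ 2 = -(4 * c + lam * ν) * (α * (lam - ν) - β ^ 2)) :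
    4 * c + lam * ν ≠ 0 ∧
    Xor' (lam = 0 ∧ ν ≠ 0 ∧ β ^ 2 * (ν ^ 2 - 4 * c) = 4 * c * α * ν)
      (lam * ν ≠ 0 ∧ ∃ σ : ℝ, σ = -(lam * ν) ∧
        β ^ 2 * ν ^ 2 = (4 * c - σ) * (α * (ν + σ / ν) + β ^ 2)) := by
  have hβ2 : β ^ 2 ≠ 0 := pow_ne_zero 2 hβ
  -- first: 4c + λν ≠ 0
  have hkey : 4 * c + lam * ν ≠ 0 := by
    intro h0
    rw [h0] at hPR
    have hν : ν = 0 := by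
      have : β ^ 2 * ν ^ 2 = 0 := by linarith [hPR]
      rcases mul_eq_zero.mp this with h | h
      · exact absurd h hβ2
      · exact pow_eq_zero_iff (by norm_num) |>.mp h
    rw [hν, mul_zero, add_zero] at h0
    exact hc (by linarith)
  refine ⟨hkey, ?_⟩
  by_cases hlam : lam = 0
  · -- case (i)
    have hν : ν ≠ 0 := by
      intro hν
      rw [hlam, hν] at hPR
      simp at hPR
      tauto
    refine Or.inl ⟨⟨hlam, hν, ?_⟩, ?_⟩
    · rw [hlam] at hPR; nlinarith [hPR]
    · rintro ⟨h, -⟩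
      exact h (by rw [hlam, zero_mul])
  · -- case (ii)
    have hν : ν ≠ 0 := by
      intro hν
      have hmat : A = !![α, β, 0; β, lam, 0; 0, 0, 0] := by rw [hA, hμ, hν]
      have hal : α * lam = β ^ 2 := by
        rw [hν] at hPR
        have h4c : (4 : ℝ) * c ≠ 0 := by intro h; exact hc (by linarith)
        have : -(4 * c) * (α * lam - β ^ 2) = 0 := by nlinarith [hPR]
        rcases mul_eq_zero.mp this with h | h
        · exact absurd h (by simpa using h4c)
        · linarith
      have := rank1_aux α β lam hlam hal
      rw [hmat] at hrank
      omega
    refine Or.inr ⟨⟨mul_ne_zero hlam hν, -(lam * ν), rfl, ?_⟩, ?_⟩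
    · have : ν + -(lam * ν) / ν = ν - lam := by field_simp; ring
      rw [this]
      nlinarith [hPR]
    · rintro ⟨h, -⟩
      exact hlam h
end

section
/- Assume β ≠ 0 and λ = μ = ν = 0 (the shape operator of a ruled hypersurface). Then (RS − SR)X and (RS − SR)Y are not both scalar multiples of W. Hence no ruled hypersurface in CP² or CH² is pseudo-Ryan. -/
/-!
For a ruled hypersurface the frame vector `Y = φX` lies in the kernel of `A`, so the Gauss term
`AX ∧ AY` of `R(X,Y)` vanishes and only the complex-structure part survives: `R(X,Y) = -4cφ`.
In the frame `(W, X, Y)` the Ricci operator is diagonal, `S = diag(2c - β², 5c - β², 5c)`, so the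
commutator `RS - SR = -4c[φ, S]` only sees the gap `β²` between the `X`- and `Y`-eigenvalues:
it is `4cβ²` times the swap of `X` and `Y`. Hence `(RS - SR)X = 4cβ² Y`, which is not a multiple
of `W` when `c ≠ 0` and `β ≠ 0`.
-/

open Matrix

abbrev frameW : Fin 3 → ℝ := ![1, 0, 0]

abbrev frameX : Fin 3 → ℝ := ![0, 1, 0]

abbrev frameY : Fin 3 → ℝ := ![0, 0, 1]

abbrev phiMatrix : Matrix (Fin 3) (Fin 3) ℝ := !![0, 0, 0; 0, 0, -1; 0, 1, 0]

abbrev swapXY : Matrix (Fin 3) (Fin 3) ℝ := !![0, 0, 0; 0, 0, 1; 0, 1, 0]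

abbrev ruledShape (α β : ℝ) : Matrix (Fin 3) (Fin 3) ℝ := !![α, β, 0; β, 0, 0; 0, 0, 0]

@[simp]
lemma wedge3_zero_right (u : Fin 3 → ℝ) : wedge3 u 0 = 0 := by
  simp [wedge3]

lemma ruledShape_mulVec_frameY (α β : ℝ) : ruledShape α β *ᵥ frameY = 0 := by
  ext i; fin_cases i <;> simp

lemma curvature_phiMatrix_part :
    wedge3 frameX frameY + wedge3 (phiMatrix *ᵥ frameX) (phiMatrix *ᵥ frameY)
      + (2 * (frameX ⬝ᵥ phiMatrix *ᵥ frameY)) • phiMatrix = (-4 : ℝ) • phiMatrix := by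
  ext i j
  fin_cases i <;> fin_cases j <;>
    simp [wedge3, vecMulVec_apply, mulVec, dotProduct, Fin.sum_univ_three] <;> norm_num

lemma ruled_curvature_eq (α β c : ℝ) :
    wedge3 (ruledShape α β *ᵥ frameX) (ruledShape α β *ᵥ frameY)
      + c • (wedge3 frameX frameY + wedge3 (phiMatrix *ᵥ frameX) (phiMatrix *ᵥ frameY)
        + (2 * (frameX ⬝ᵥ phiMatrix *ᵥ frameY)) • phiMatrix)
      = (-4 * c) • phiMatrix := by
  rw [ruledShape_mulVec_frameY, wedge3_zero_right, zero_add, curvature_phiMatrix_part,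
    smul_smul, mul_comm]

lemma ruled_ricci_eq (α β c : ℝ) :
    (5 * c) • (1 : Matrix (Fin 3) (Fin 3) ℝ) - (3 * c) • vecMulVec frameW frameW
      + α • ruledShape α β - ruledShape α β * ruledShape α β
      = diagonal ![2 * c - β ^ 2, 5 * c - β ^ 2, 5 * c] := by
  ext i j
  fin_cases i <;> fin_cases j <;> simp [one_apply] <;> ring

lemma phiMatrix_commutator_diagonal (d : Fin 3 → ℝ) :
    phiMatrix * diagonal d - diagonal d * phiMatrix = (d 1 - d 2) • swapXY := by
  ext i j
  rw [Matrix.sub_apply, mul_diagonal, diagonal_mul]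
  fin_cases i <;> fin_cases j <;> simp; ring

lemma smul_phiMatrix_commutator_ruled_ricci (k β c : ℝ) :
    (k • phiMatrix) * diagonal ![2 * c - β ^ 2, 5 * c - β ^ 2, 5 * c]
      - diagonal ![2 * c - β ^ 2, 5 * c - β ^ 2, 5 * c] * (k • phiMatrix)
      = (-(k * β ^ 2)) • swapXY := by
  rw [Matrix.smul_mul, Matrix.mul_smul, ← smul_sub, phiMatrix_commutator_diagonal, smul_smul]
  congr 1
  simp

/-- for a ruled hypersurface (β ≠ 0, λ = μ = ν = 0), (RS − SR)X and
(RS − SR)Y are not both scalar multiples of W; hence no ruled hypersurface in CP²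
or CH² is pseudo-Ryan. -/
theorem ruled_not_pseudo_ryan
    (α β lam μ ν c : ℝ) (hc : c ≠ 0) (hβ : β ≠ 0)
    (hlam : lam = 0) (hμ : μ = 0) (hν : ν = 0)
    (W X Y : Fin 3 → ℝ)
    (hWdef : W = ![1, 0, 0]) (hXdef : X = ![0, 1, 0]) (hYdef : Y = ![0, 0, 1])
    (A φ S R : Matrix (Fin 3) (Fin 3) ℝ)
    (hA : A = !![α, β, 0; β, lam, μ; 0, μ, ν])
    (hφ : φ = !![0, 0, 0; 0, 0, -1; 0, 1, 0])
    (hS : S = (5 * c) • (1 : Matrix (Fin 3) (Fin 3) ℝ) - (3 * c) • Matrix.vecMulVec W W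
        + (α + lam + ν) • A - A * A)
    (hR : R = wedge3 (A.mulVec X) (A.mulVec Y)
        + c • (wedge3 X Y + wedge3 (φ.mulVec X) (φ.mulVec Y) + (2 * (X ⬝ᵥ φ.mulVec Y)) • φ)) :
    ¬ ((∃ t : ℝ, (R * S - S * R).mulVec X = t • W) ∧
       (∃ t : ℝ, (R * S - S * R).mulVec Y = t • W)) := by
  subst hlam hμ hν
  have hR' : R = (-4 * c) • phiMatrix := by subst_vars; exact ruled_curvature_eq α β c
  have hS' : S = diagonal ![2 * c - β ^ 2, 5 * c - β ^ 2, 5 * c] := by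
    rw [hS, add_zero, add_zero]; subst_vars; exact ruled_ricci_eq α β c
  rintro ⟨⟨t, ht⟩, -⟩
  rw [hR', hS', smul_phiMatrix_commutator_ruled_ricci, hXdef, hWdef] at ht
  have h4cβ2 : 4 * c * β ^ 2 = 0 := by simpa using congrFun ht 2
  exact mul_ne_zero (mul_ne_zero four_ne_zero hc) (pow_ne_zero 2 hβ) h4cβ2
end

section
/- Suppose AW = αW for some real α, and there exist real numbers λ₁, λ₂ with λ₁λ₂ + c = 0 and a subspace V ⊆ W^⊥ such that W^⊥ = V ⊕ φ(V), AX = λ₁X for all X ∈ V, and AY = λ₂Y for all Y ∈ φ(V) (the situation of a type B homogeneous Hopf hypersurface). Then (φ∘A)²X = cX for all X ∈ W^⊥, S*X = (2n−1)c·X for all X ∈ W^⊥, and trace S* = 2(n−1)(2n−1)c; in particular the *-Einstein condition holds. -/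
open scoped InnerProductSpace
open Module

/-!
On `V` the operator `φ A φ A` acts as `λ₁ λ₂ φ²`, and on `φ(V)` as `λ₂ λ₁ φ²`; since `φ² = -1`
on `W^⊥ = V ⊕ φ(V)`, this gives `(φ A)² = -λ₁ λ₂ = c` there, so `S* = (2n - 1) c` on `W^⊥`.
As moreover `S* W = 0`, the operator `S*` is `(2n - 1) c` times the orthogonal projection onto
the `(2n - 2)`-dimensional space `W^⊥`, whence its trace.
-/

theorem LinearMap.trace_eq_mul_finrank_of_eqOn_orthogonal {E : Type*} [NormedAddCommGroup E]
    [InnerProductSpace ℝ E] [FiniteDimensional ℝ E] {K : Submodule ℝ E} {T : E →ₗ[ℝ] E} {κ : ℝ}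
    (hK : ∀ x ∈ K, T x = 0) (hKperp : ∀ x ∈ Kᗮ, T x = κ • x) :
    LinearMap.trace ℝ E T = κ * finrank ℝ Kᗮ := by
  have hT : T = κ • (Kᗮ.starProjection : E →ₗ[ℝ] E) := by
    ext x
    conv_lhs => rw [← K.starProjection_add_starProjection_orthogonal x]
    rw [map_add, hK _ (K.starProjection_apply_mem x),
      hKperp _ (Kᗮ.starProjection_apply_mem x), zero_add]
    rfl
  have hproj : LinearMap.IsProj Kᗮ (Kᗮ.starProjection : E →ₗ[ℝ] E) :=
    ⟨Kᗮ.starProjection_apply_mem, fun _ hx => Submodule.starProjection_eq_self_iff.mpr hx⟩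
  rw [hT, map_smul, hproj.trace, smul_eq_mul]

theorem LinearMap.comp_comp_apply_of_mem_sup_map {R M : Type*} [CommRing R] [AddCommGroup M]
    [Module R M] {φ A : M →ₗ[R] M} {V : Submodule R M} {a b : R}
    (hφφ : ∀ v ∈ V, φ (φ v) = -v) (hAV : ∀ v ∈ V, A v = a • v)
    (hAφV : ∀ y ∈ V.map φ, A y = b • y) {x : M} (hx : x ∈ V ⊔ V.map φ) :
    ((φ ∘ₗ A) ∘ₗ (φ ∘ₗ A)) x = -(a * b) • x := by
  obtain ⟨v, hv, _, ⟨u, hu, rfl⟩, rfl⟩ := Submodule.mem_sup.mp hx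
  have on_V : φ (A (φ (A v))) = -(a * b) • v := by
    simp only [hAV v hv, map_smul, hAφV _ (Submodule.mem_map_of_mem hv), hφφ v hv]
    module
  have on_φV : φ (A (φ (A (φ u)))) = -(a * b) • φ u := by
    simp only [hAφV _ (Submodule.mem_map_of_mem hu), map_smul, hφφ u hu, map_neg, hAV u hu]
    module
  simp only [LinearMap.comp_apply, map_add, on_V, on_φV, smul_add]

section AlmostContact

variable {E : Type*} [NormedAddCommGroup E] [InnerProductSpace ℝ E] {W : E} {φ : E →ₗ[ℝ] E}

theorem apply_apply_of_inner_eq_zero (hφφ : ∀ X : E, φ (φ X) = -X + ⟪X, W⟫_ℝ • W) {X : E}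
    (hX : ⟪X, W⟫_ℝ = 0) : φ (φ X) = -X := by
  rw [hφφ, hX, zero_smul, add_zero]

theorem starRicci_apply_of_inner_eq_zero (hφφ : ∀ X : E, φ (φ X) = -X + ⟪X, W⟫_ℝ • W)
    {A : E →ₗ[ℝ] E} {a c : ℝ} {X : E} (hX : ⟪X, W⟫_ℝ = 0)
    (hφA : ((φ ∘ₗ A) ∘ₗ (φ ∘ₗ A)) X = c • X) :
    (-(a • (φ ∘ₗ φ) + (φ ∘ₗ A) ∘ₗ (φ ∘ₗ A))) X = (a - c) • X := by
  rw [LinearMap.neg_apply, LinearMap.add_apply, hφA, LinearMap.smul_apply, LinearMap.comp_apply,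
    apply_apply_of_inner_eq_zero hφφ hX]
  module

theorem starRicci_apply_eq_zero (hφW : φ W = 0) {A : E →ₗ[ℝ] E} {α : ℝ} (hAW : A W = α • W)
    (a : ℝ) : (-(a • (φ ∘ₗ φ) + (φ ∘ₗ A) ∘ₗ (φ ∘ₗ A))) W = 0 := by
  simp [hφW, hAW]

end AlmostContact

theorem type_B_star_einstein_general
    {n : ℕ} (hn : 2 ≤ n)
    {E : Type*} [NormedAddCommGroup E] [InnerProductSpace ℝ E] [FiniteDimensional ℝ E]
    (hdim : Module.finrank ℝ E = 2 * n - 1)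
    (W : E) (hW : ‖W‖ = 1)
    (φ : E →ₗ[ℝ] E)
    (hφW : φ W = 0) (hφφ : ∀ X : E, φ (φ X) = -X + ⟪X, W⟫_ℝ • W)
    (c : ℝ)
    (A : E →ₗ[ℝ] E)
    (α : ℝ) (hAW : A W = α • W)
    (lam1 lam2 : ℝ) (hlam : lam1 * lam2 + c = 0)
    (V : Submodule ℝ E)
    (hVperp : V ≤ (Submodule.span ℝ ({W} : Set E))ᗮ)
    (hsum : V ⊔ V.map φ = (Submodule.span ℝ ({W} : Set E))ᗮ)
    (hAV : ∀ X ∈ V, A X = lam1 • X)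
    (hAφV : ∀ Y ∈ V.map φ, A Y = lam2 • Y)
    (Sstar : E →ₗ[ℝ] E)
    (hS : Sstar = -((2 * (n : ℝ) * c) • (φ ∘ₗ φ) + (φ ∘ₗ A) ∘ₗ (φ ∘ₗ A))) :
    (∀ X : E, ⟪X, W⟫_ℝ = 0 →
        ((φ ∘ₗ A) ∘ₗ (φ ∘ₗ A)) X = c • X ∧ Sstar X = ((2 * (n : ℝ) - 1) * c) • X) ∧
    LinearMap.trace ℝ E Sstar = 2 * ((n : ℝ) - 1) * (2 * (n : ℝ) - 1) * c ∧
    (∀ X Y : E, ⟪X, W⟫_ℝ = 0 → ⟪Y, W⟫_ℝ = 0 →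
        ⟪Sstar X, Y⟫_ℝ = ((2 * (n : ℝ) - 1) * c) * ⟪X, Y⟫_ℝ) := by
  have hperp : ∀ X : E, X ∈ (Submodule.span ℝ ({W} : Set E))ᗮ ↔ ⟪X, W⟫_ℝ = 0 := fun _ =>
    Submodule.mem_orthogonal_singleton_iff_inner_left
  have hφφV : ∀ v ∈ V, φ (φ v) = -v := fun v hv =>
    apply_apply_of_inner_eq_zero hφφ ((hperp v).mp (hVperp hv))
  have hφA : ∀ X : E, ⟪X, W⟫_ℝ = 0 → ((φ ∘ₗ A) ∘ₗ (φ ∘ₗ A)) X = c • X := fun X hX => by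
    rw [LinearMap.comp_comp_apply_of_mem_sup_map hφφV hAV hAφV (hsum ▸ (hperp X).mpr hX),
      show -(lam1 * lam2) = c by linarith]
  have hSperp : ∀ X : E, ⟪X, W⟫_ℝ = 0 → Sstar X = ((2 * (n : ℝ) - 1) * c) • X := fun X hX => by
    rw [hS, starRicci_apply_of_inner_eq_zero hφφ hX (hφA X hX)]
    ring_nf
  have hSW : ∀ x ∈ Submodule.span ℝ ({W} : Set E), Sstar x = 0 := by
    intro x hx
    obtain ⟨r, rfl⟩ := Submodule.mem_span_singleton.mp hx
    rw [map_smul, hS, starRicci_apply_eq_zero hφW hAW, smul_zero]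
  have hW0 : W ≠ 0 := norm_ne_zero_iff.mp (hW ▸ one_ne_zero)
  have hdim' : Fact (finrank ℝ E = (2 * n - 2) + 1) := ⟨by omega⟩
  have hrank : (finrank ℝ (Submodule.span ℝ ({W} : Set E))ᗮ : ℝ) = 2 * ((n : ℝ) - 1) := by
    rw [Submodule.finrank_orthogonal_span_singleton (n := 2 * n - 2) hW0,
      Nat.cast_sub (by omega)]
    push_cast
    ring
  refine ⟨fun X hX => ⟨hφA X hX, hSperp X hX⟩, ?_, fun X Y hX _ => ?_⟩
  · rw [LinearMap.trace_eq_mul_finrank_of_eqOn_orthogonal hSW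
      (fun x hx => hSperp x ((hperp x).mp hx)), hrank]
    ring
  · rw [hSperp X hX, real_inner_smul_left]

/-- for the shape operator of a type B homogeneous Hopf hypersurface
(AW = αW, W^⊥ = V ⊕ φ(V) with A = λ₁ on V, A = λ₂ on φ(V), λ₁λ₂ + c = 0), one has
(φ∘A)²X = cX and S*X = (2n−1)c·X for X ∈ W^⊥, and trace S* = 2(n−1)(2n−1)c; in
particular the *-Einstein condition holds. -/
theorem type_B_star_einstein
    {n : ℕ} (hn : 2 ≤ n)
    {E : Type*} [NormedAddCommGroup E] [InnerProductSpace ℝ E] [FiniteDimensional ℝ E]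
    (hdim : Module.finrank ℝ E = 2 * n - 1)
    (W : E) (hW : ‖W‖ = 1)
    (φ : E →ₗ[ℝ] E) (hφskew : ∀ x y : E, ⟪φ x, y⟫_ℝ = - ⟪x, φ y⟫_ℝ)
    (hφW : φ W = 0) (hφφ : ∀ X : E, φ (φ X) = -X + ⟪X, W⟫_ℝ • W)
    (c : ℝ) (hc : c ≠ 0)
    (A : E →ₗ[ℝ] E) (hA : ∀ x y : E, ⟪A x, y⟫_ℝ = ⟪x, A y⟫_ℝ)
    (α : ℝ) (hAW : A W = α • W)
    (lam1 lam2 : ℝ) (hlam : lam1 * lam2 + c = 0)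
    (V : Submodule ℝ E)
    (hVperp : V ≤ (Submodule.span ℝ ({W} : Set E))ᗮ)
    (hdisj : Disjoint V (V.map φ))
    (hsum : V ⊔ V.map φ = (Submodule.span ℝ ({W} : Set E))ᗮ)
    (hAV : ∀ X ∈ V, A X = lam1 • X)
    (hAφV : ∀ Y ∈ V.map φ, A Y = lam2 • Y)
    (Sstar : E →ₗ[ℝ] E)
    (hS : Sstar = -((2 * (n : ℝ) * c) • (φ ∘ₗ φ) + (φ ∘ₗ A) ∘ₗ (φ ∘ₗ A))) :
    (∀ X : E, ⟪X, W⟫_ℝ = 0 →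
        ((φ ∘ₗ A) ∘ₗ (φ ∘ₗ A)) X = c • X ∧ Sstar X = ((2 * (n : ℝ) - 1) * c) • X) ∧
    LinearMap.trace ℝ E Sstar = 2 * ((n : ℝ) - 1) * (2 * (n : ℝ) - 1) * c ∧
    (∀ X Y : E, ⟪X, W⟫_ℝ = 0 → ⟪Y, W⟫_ℝ = 0 →
        ⟪Sstar X, Y⟫_ℝ = ((2 * (n : ℝ) - 1) * c) * ⟪X, Y⟫_ℝ) :=
  type_B_star_einstein_general hn hdim W hW φ hφW hφφ c A α hAW lam1 lam2 hlam V hVperp hsum hAV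
    hAφV Sstar hS
end

section
/- Let α, c, a, b, p, q be real numbers and let R be the 2×4 real matrix with rows (a, b, −p, −q) and (−2q + αb, 2p − αa, 2cb + αq, −(2ca + αp)). If it is not the case that both 2(ap + bq) = α(a² + b²) and p² + q² + c(a² + b²) = 0, then R has rank 2. -/
/-!
A 2×4 matrix has rank 2 as soon as one of its 2×2 minors is nonzero. Here the minor on columns
`0, 1` is `2(ap + bq) - α(a² + b²)`, and the minors on columns `1, 2` and `0, 3` differ by
`2(p² + q² + c(a² + b²))`; so if either equation fails, some minor is nonzero.
-/

open Matrix

theorem Matrix.rank_eq_card_height_of_det_submatrix_ne_zero {m n K : Type*} [Fintype m]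
    [Fintype n] [DecidableEq m] [CommRing K] [IsDomain K] (A : Matrix m n K) (c : m → n)
    (hc : (A.submatrix id c).det ≠ 0) : A.rank = Fintype.card m :=
  le_antisymm A.rank_le_card_height <|
    (rank_of_det_ne_zero hc).symm.trans_le (A.rank_submatrix_le id c)

theorem Matrix.det_submatrix_fin_two {n K : Type*} [CommRing K] (A : Matrix (Fin 2) n K)
    (j k : n) : (A.submatrix id ![j, k]).det = A 0 j * A 1 k - A 0 k * A 1 j := by
  simp [det_fin_two]

/-- the 2×4 matrix R with rows (a, b, −p, −q) and
(−2q + αb, 2p − αa, 2cb + αq, −(2ca + αp)) has rank 2 unless both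
2(ap + bq) = α(a² + b²) and p² + q² + c(a² + b²) = 0. -/
theorem noncharacteristic_rank_two
    (α c a b p q : ℝ)
    (R : Matrix (Fin 2) (Fin 4) ℝ)
    (hR : R = !![a, b, -p, -q;
                 -2 * q + α * b, 2 * p - α * a, 2 * c * b + α * q, -(2 * c * a + α * p)])
    (h : ¬ (2 * (a * p + b * q) = α * (a ^ 2 + b ^ 2) ∧
            p ^ 2 + q ^ 2 + c * (a ^ 2 + b ^ 2) = 0)) :
    R.rank = 2 := by
  suffices ∃ j k, R 0 j * R 1 k - R 0 k * R 1 j ≠ 0 by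
    obtain ⟨j, k, hjk⟩ := this
    rw [← det_submatrix_fin_two] at hjk
    simpa using R.rank_eq_card_height_of_det_submatrix_ne_zero _ hjk
  have minor_01 : R 0 0 * R 1 1 - R 0 1 * R 1 0 = 2 * (a * p + b * q) - α * (a ^ 2 + b ^ 2) := by
    simp only [hR, of_apply, cons_val', cons_val_zero, cons_val_one, cons_val_fin_one]
    ring
  have minor_12_sub_minor_03 : (R 0 1 * R 1 2 - R 0 2 * R 1 1) - (R 0 0 * R 1 3 - R 0 3 * R 1 0)
      = 2 * (p ^ 2 + q ^ 2 + c * (a ^ 2 + b ^ 2)) := by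
    simp only [hR, of_apply, cons_val', cons_val_zero, cons_val_one, cons_val, cons_val_fin_one]
    ring
  by_cases hE1 : 2 * (a * p + b * q) = α * (a ^ 2 + b ^ 2)
  · have hE2 : p ^ 2 + q ^ 2 + c * (a ^ 2 + b ^ 2) ≠ 0 := fun hE2 ↦ h ⟨hE1, hE2⟩
    by_cases h03 : R 0 0 * R 1 3 - R 0 3 * R 1 0 = 0
    · exact ⟨1, 2, fun h12 ↦ hE2 (by linear_combination (h12 - h03 - minor_12_sub_minor_03) / 2)⟩
    · exact ⟨0, 3, h03⟩
  · exact ⟨0, 1, fun h01 ↦ hE1 (by linear_combination h01 - minor_01)⟩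
end

section
/- Let r > 0, c = −1/r², u ∈ (−1, 1), and set ν = u/r, α = (3u − u³)/r, β = (1 − u²)^{3/2}/r, λ = u³/r. Then (α, β, λ, ν) is a constant solution of the ODE system: β(α + λ − 3ν) = 0; β² + λ² − 2λν + αν + c = 0; (2λ + ν)β² + (ν − λ)(αλ − λ² + c) = 0. Moreover, the eigenvalues of the symmetric 3×3 matrix A with rows (α, β, 0), (β, λ, 0), (0, 0, ν) are exactly ν, (3/2)ν + (1/r)√(1 − (3/4)r²ν²), and (3/2)ν − (1/r)√(1 − (3/4)r²ν²). -/
open Matrix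

/-- the constant solutions of the ODE system, and the principal
curvatures of the corresponding non-Hopf hypersurfaces of CH² with constant
principal curvatures (Berndt–Diaz-Ramos). -/
theorem berndt_orbit_constant_solution
    (r : ℝ) (hr : 0 < r) (c u ν α β lam : ℝ)
    (hc : c = -1 / r ^ 2) (hu1 : -1 < u) (hu2 : u < 1)
    (hν : ν = u / r) (hα : α = (3 * u - u ^ 3) / r)
    (hβ : β = (1 - u ^ 2) ^ ((3 : ℝ) / 2) / r) (hlam : lam = u ^ 3 / r)
    (A : Matrix (Fin 3) (Fin 3) ℝ)
    (hA : A = !![α, β, 0; β, lam, 0; 0, 0, ν]) :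
    β * (α + lam - 3 * ν) = 0 ∧
    β ^ 2 + lam ^ 2 - 2 * lam * ν + α * ν + c = 0 ∧
    (2 * lam + ν) * β ^ 2 + (ν - lam) * (α * lam - lam ^ 2 + c) = 0 ∧
    spectrum ℝ A =
      {ν, 3 / 2 * ν + (1 / r) * Real.sqrt (1 - 3 / 4 * r ^ 2 * ν ^ 2),
          3 / 2 * ν - (1 / r) * Real.sqrt (1 - 3 / 4 * r ^ 2 * ν ^ 2)} := by
  have hr0 : r ≠ 0 := ne_of_gt hr
  have hu2le : u ^ 2 < 1 := by nlinarith
  have h1u : (0 : ℝ) ≤ 1 - u ^ 2 := by linarith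
  -- β² = (1 - u²)³ / r²
  have hb2 : β ^ 2 = (1 - u ^ 2) ^ 3 / r ^ 2 := by
    rw [hβ, div_pow]
    congr 1
    have : ((1 - u ^ 2) ^ ((3 : ℝ) / 2)) ^ (2 : ℕ) =
        (1 - u ^ 2) ^ (((3 : ℝ) / 2) * (2 : ℕ)) := by
      rw [← Real.rpow_natCast ((1 - u ^ 2) ^ ((3 : ℝ) / 2)) 2, ← Real.rpow_mul h1u]
    rw [this, show ((3 : ℝ) / 2 * ((2 : ℕ) : ℝ)) = ((3 : ℕ) : ℝ) by push_cast; ring,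
      Real.rpow_natCast]
  -- the square root
  have hkey : 1 - 3 / 4 * r ^ 2 * ν ^ 2 = 1 - 3 / 4 * u ^ 2 := by
    rw [hν]; field_simp; try ring
  have hsnn : (0 : ℝ) ≤ 1 - 3 / 4 * r ^ 2 * ν ^ 2 := by
    rw [hkey]; nlinarith
  have hs2 : Real.sqrt (1 - 3 / 4 * r ^ 2 * ν ^ 2) ^ 2 = 1 - 3 / 4 * u ^ 2 := by
    rw [Real.sq_sqrt hsnn, hkey]
  set s : ℝ := Real.sqrt (1 - 3 / 4 * r ^ 2 * ν ^ 2) with hs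
  refine ⟨?_, ?_, ?_, ?_⟩
  · have : α + lam - 3 * ν = 0 := by
      rw [hα, hlam, hν]; field_simp; try ring
    rw [this, mul_zero]
  · rw [hb2, hlam, hν, hα, hc]; field_simp; try ring
  · rw [hb2, hlam, hν, hα, hc]; field_simp; try ring
  · ext x
    have hdet : algebraMap ℝ (Matrix (Fin 3) (Fin 3) ℝ) x - A =
        !![x - α, -β, 0; -β, x - lam, 0; 0, 0, x - ν] := by
      ext i j
      fin_cases i <;> fin_cases j <;>
        simp [Matrix.algebraMap_matrix_apply, hA]
    have hmem : x ∈ spectrum ℝ A ↔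
        (algebraMap ℝ (Matrix (Fin 3) (Fin 3) ℝ) x - A).det = 0 := by
      rw [spectrum.mem_iff, Matrix.isUnit_iff_isUnit_det, isUnit_iff_ne_zero, not_not]
    have hdetval : (algebraMap ℝ (Matrix (Fin 3) (Fin 3) ℝ) x - A).det =
        (x - ν) * ((x - (3 / 2 * ν + (1 / r) * s)) * (x - (3 / 2 * ν - (1 / r) * s))) := by
      rw [hdet]
      simp [Matrix.det_fin_three]
      have key : (x - α) * (x - lam) - β ^ 2 =
          (x - (3 / 2 * ν + (1 / r) * s)) * (x - (3 / 2 * ν - (1 / r) * s)) := by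
        have hsum : α + lam = 3 * ν := by
          rw [hα, hlam, hν]; field_simp; try ring
        have hprod : α * lam - β ^ 2 = 3 * ν ^ 2 - 1 / r ^ 2 := by
          rw [hα, hlam, hb2, hν]; field_simp; try ring
        have hs2' : (1 / r) ^ 2 * s ^ 2 = 1 / r ^ 2 * (1 - 3 / 4 * u ^ 2) := by
          rw [hs2]; ring
        have hν2 : ν ^ 2 = u ^ 2 / r ^ 2 := by rw [hν]; field_simp; try ring
        have : (x - (3 / 2 * ν + (1 / r) * s)) * (x - (3 / 2 * ν - (1 / r) * s)) =
            x ^ 2 - 3 * ν * x + (9 / 4 * ν ^ 2 - (1 / r) ^ 2 * s ^ 2) := by ring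
        rw [this, hs2', hν2]
        have : (x - α) * (x - lam) - β ^ 2 =
            x ^ 2 - (α + lam) * x + (α * lam - β ^ 2) := by ring
        rw [this, hsum, hprod, hν2]
        field_simp
        try ring
      linear_combination (x - ν) * key
    rw [hmem, hdetval]
    simp only [Set.mem_insert_iff, Set.mem_singleton_iff, mul_eq_zero, sub_eq_zero]
    try tauto
end
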